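/- arXiv:2210.13022 — 5 statements merged into one kernel-verified Lean document; each statement's English description precedes it below -/
import Mathlib

section
/- If the generating polynomial of an ℕ-valued statistic X on a uniform finite set is a ratio of products of q-integers ∏[b_k]_q / ∏[a_k]_q, then all odd cumulants of X of order at least 3 vanish: κ^{(2r+1)}(X) = 0 for all r ≥ 1. -/
/-!
Substituting `q = e^z`, the hypothesis makes `P` palindromic up to a monomial:
`P(q⁻¹) q^{∑ b} = P(q) q^{∑ a}`. Hence the cumulant generating function `K(z) = log E[e^{zX}]`
satisfies `K(z) - K(-z) = (∑ b - ∑ a) z`, a linear function, so every odd derivative of `K`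
at `0` of order at least `3` vanishes.
-/

/-- The `r`-th cumulant of the statistic `X` on a finite set `𝔗` endowed with the
uniform measure: the `r`-th derivative at `0` of `z ↦ log E[e^{zX}]`. -/
noncomputable def cumulant {𝔗 : Type*} [Fintype 𝔗] (X : 𝔗 → ℕ) (r : ℕ) : ℝ :=
  iteratedDeriv r
    (fun z => Real.log ((∑ T : 𝔗, Real.exp (z * X T)) / (Fintype.card 𝔗 : ℝ))) 0

open Finset

theorem iteratedDeriv_eq_zero_of_sub_comp_neg_eq_smul {F : Type*} [NormedAddCommGroup F]
    [NormedSpace ℝ F] {f : ℝ → F} {n : ℕ} (hf : ContDiffAt ℝ n f 0) (v : F)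
    (h : ∀ z, f z - f (-z) = z • v) (hn : Odd n) (hn1 : n ≠ 1) :
    iteratedDeriv n f 0 = 0 := by
  have hf_neg : ContDiffAt ℝ n (fun z => f (-z)) 0 := by
    rw [← neg_zero] at hf
    exact hf.comp 0 contDiff_neg.contDiffAt
  have hlin : iteratedDeriv n (fun z => f z - f (-z)) 0 = 0 := by
    simp only [h, iteratedDeriv_smul_const (f := fun z : ℝ => z) contDiffAt_id,
      iteratedDeriv_fun_id_zero, hn1, if_false, zero_smul]
  rw [iteratedDeriv_fun_sub hf hf_neg, iteratedDeriv_comp_neg, neg_zero, hn.neg_one_pow,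
    neg_one_smul, sub_neg_eq_add, ← two_smul ℝ] at hlin
  exact (smul_eq_zero.mp hlin).resolve_left two_ne_zero

theorem prod_one_sub_inv_pow_mul_prod_pow {K ι : Type*} [Field K] [Fintype ι] (a : ι → ℕ)
    {q : K} (hq : q ≠ 0) :
    (∏ k, (1 - q⁻¹ ^ a k)) * ∏ k, q ^ a k = (-1) ^ Fintype.card ι * ∏ k, (1 - q ^ a k) := by
  rw [← prod_mul_distrib, ← card_univ, ← prod_const, ← prod_mul_distrib]
  refine prod_congr rfl fun k _ => ?_
  rw [sub_mul, inv_pow, inv_mul_cancel₀ (pow_ne_zero _ hq)]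
  ring

theorem apply_inv_mul_prod_pow_eq {K ι : Type*} [Field K] [Fintype ι] (P : K → K)
    (a b : ι → ℕ) (hP : ∀ q, P q * ∏ k, (1 - q ^ a k) = ∏ k, (1 - q ^ b k)) {q : K}
    (hq : q ≠ 0) (hA : ∏ k, (1 - q ^ a k) ≠ 0) :
    P q⁻¹ * ∏ k, q ^ b k = P q * ∏ k, q ^ a k := by
  have hsign : ((-1 : K) ^ Fintype.card ι) ≠ 0 := pow_ne_zero _ (neg_ne_zero.mpr one_ne_zero)
  refine mul_right_cancel₀ (mul_ne_zero hsign hA) ?_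
  linear_combination (-P q⁻¹ * ∏ k, q ^ b k) * prod_one_sub_inv_pow_mul_prod_pow a hq
    + (∏ k, q ^ a k) * (∏ k, q ^ b k) * hP q⁻¹
    + (∏ k, q ^ a k) * prod_one_sub_inv_pow_mul_prod_pow b hq
    - (-1) ^ Fintype.card ι * (∏ k, q ^ a k) * hP q

theorem sum_exp_neg_mul_mul_exp_eq {𝔗 ι : Type*} [Fintype 𝔗] [Fintype ι] (X : 𝔗 → ℕ)
    (a b : ι → ℕ) (ha : ∀ k, 0 < a k)
    (hP : ∀ q : ℝ, (∑ T, q ^ X T) * ∏ k, (1 - q ^ a k) = ∏ k, (1 - q ^ b k)) (z : ℝ) :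
    (∑ T, Real.exp (-z * X T)) * Real.exp (z * ∑ k, (b k : ℝ))
      = (∑ T, Real.exp (z * X T)) * Real.exp (z * ∑ k, (a k : ℝ)) := by
  rcases eq_or_ne z 0 with rfl | hz
  · simp
  set q := Real.exp z
  have hq1 : q ≠ 1 := by simpa [q] using hz
  have hA : ∏ k, (1 - q ^ a k) ≠ 0 := prod_ne_zero_iff.mpr fun k _ => sub_ne_zero.mpr
    fun h => hq1 ((pow_eq_one_iff_of_nonneg (Real.exp_pos z).le (ha k).ne').mp h.symm)
  have key :=
    apply_inv_mul_prod_pow_eq (fun q : ℝ => ∑ T, q ^ X T) a b hP (Real.exp_pos z).ne' hA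
  have exp_mul_nat (y : ℝ) (m : ℕ) : Real.exp (y * m) = Real.exp y ^ m := by
    rw [mul_comm, Real.exp_nat_mul]
  simp only [mul_sum, Real.exp_sum, exp_mul_nat, Real.exp_neg]
  exact key

theorem odd_cumulants_vanish_general {𝔗 : Type*} [Fintype 𝔗] [Nonempty 𝔗]
    (X : 𝔗 → ℕ) (l : ℕ) (a b : Fin l → ℕ)
    (ha : ∀ k, 0 < a k)
    (hP : ∀ q : ℝ,
      (∑ T : 𝔗, q ^ X T) * ∏ k, (1 - q ^ a k) = ∏ k, (1 - q ^ b k)) :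
    ∀ r : ℕ, 1 ≤ r → cumulant X (2 * r + 1) = 0 := by
  intro r hr
  have hsum_pos (z : ℝ) : 0 < ∑ T : 𝔗, Real.exp (z * X T) :=
    sum_pos (fun T _ => Real.exp_pos _) univ_nonempty
  have hK_smooth : ContDiff ℝ (2 * r + 1)
      (fun z => Real.log ((∑ T : 𝔗, Real.exp (z * X T)) / (Fintype.card 𝔗 : ℝ))) :=
    ContDiff.log (by fun_prop) fun z => (div_pos (hsum_pos z) (by positivity)).ne'
  refine iteratedDeriv_eq_zero_of_sub_comp_neg_eq_smul hK_smooth.contDiffAt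
    (∑ k, (b k : ℝ) - ∑ k, (a k : ℝ)) (fun z => ?_) (odd_two_mul_add_one r) (by omega)
  have hsym := congrArg Real.log (sum_exp_neg_mul_mul_exp_eq X a b ha hP z)
  rw [Real.log_mul (hsum_pos (-z)).ne' (Real.exp_pos _).ne',
    Real.log_mul (hsum_pos z).ne' (Real.exp_pos _).ne', Real.log_exp, Real.log_exp] at hsym
  rw [Real.log_div (hsum_pos z).ne' (by positivity),
    Real.log_div (hsum_pos (-z)).ne' (by positivity), smul_eq_mul]
  linarith

/-- If the generating polynomial `P(q) = ∑_T q^{X T}` is a ratio of `q`-integers,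
i.e. `P(q) ∏_k (1 - q^{a_k}) = ∏_k (1 - q^{b_k})`, then all odd cumulants of `X`
of order at least `3` vanish: `κ^{(2r+1)}(X) = 0` for all `r ≥ 1`. -/
theorem odd_cumulants_vanish {𝔗 : Type*} [Fintype 𝔗] [Nonempty 𝔗]
    (X : 𝔗 → ℕ) (l : ℕ) (a b : Fin l → ℕ)
    (ha : ∀ k, 0 < a k) (hb : ∀ k, 0 < b k)
    (hP : ∀ q : ℝ,
      (∑ T : 𝔗, q ^ X T) * ∏ k, (1 - q ^ a k) = ∏ k, (1 - q ^ b k)) :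
    ∀ r : ℕ, 1 ≤ r → cumulant X (2 * r + 1) = 0 :=
  odd_cumulants_vanish_general X l a b ha hP
end

section
/- Let λ be an integer partition with ℓ(λ) ≤ n. Then one has the equality of multisets: {h(□) : □ ∈ λ} ⊔ {λ_i − λ_j + j − i : 1 ≤ i < j ≤ n} = {n + c(□) : □ ∈ λ} ⊔ {1 repeated (n−1) times, 2 repeated (n−2) times, …, (n−1) once}, where h(□) is the hook length of the cell □, c(□) = j − i is the content of a cell in row i and column j, and λ_i = 0 for i > ℓ(λ). -/
open Finset

/-- The hook length of the cell `(i,j)` of a Young diagram `μ`: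
the number of cells of the hook based at `(i,j)`. -/
def hookLength (μ : YoungDiagram) (i j : ℕ) : ℕ :=
  (μ.rowLen i - j) + (μ.colLen j - i) - 1

private lemma rowLen_le_of_lt_colLen {μ : YoungDiagram} {i j : ℕ} :
    j < μ.rowLen i ↔ (i, j) ∈ μ := YoungDiagram.mem_iff_lt_rowLen.symm

/-- reversing `range B` -/
private lemma revRange (B : ℕ) :
    ((range B).val.map fun v => B - 1 - v) = (range B).val := by
  refine (Multiset.Nodup.ext ?_ (range B).nodup).mpr ?_
  · refine Multiset.Nodup.map_on ?_ (range B).nodup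
    intro a ha b hb h
    rw [Finset.mem_val, Finset.mem_range] at ha hb
    omega
  · intro m
    simp only [Multiset.mem_map, Finset.mem_val, Finset.mem_range]
    constructor
    · rintro ⟨v, hv, rfl⟩; omega
    · intro hm; exact ⟨B - 1 - m, by omega, by omega⟩

/-- The Maya-diagram / beta-number lemma, per row. -/
private lemma maya (μ : YoungDiagram) (n i : ℕ) (hi : i < n) (hlen : μ.colLen 0 ≤ n) :
    ((Finset.Ioo i n).val.map fun k => μ.rowLen k + (n - 1 - k)) +
      ((range (μ.rowLen i)).val.map fun j => n - μ.colLen j + j) =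
    (range (μ.rowLen i + (n - 1 - i))).val := by
  have hC : ∀ j, μ.colLen j ≤ n := fun j => le_trans (μ.colLen_anti 0 j (Nat.zero_le _)) hlen
  have hCanti : ∀ j1 j2, j1 ≤ j2 → μ.colLen j2 ≤ μ.colLen j1 := fun j1 j2 h => μ.colLen_anti j1 j2 h
  have hRanti : ∀ k1 k2, k1 ≤ k2 → μ.rowLen k2 ≤ μ.rowLen k1 := fun k1 k2 h => μ.rowLen_anti k1 k2 h
  have hRC : ∀ k j, j < μ.rowLen k ↔ k < μ.colLen j := by
    intro k j
    rw [← YoungDiagram.mem_iff_lt_rowLen, YoungDiagram.mem_iff_lt_colLen]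
  refine (Multiset.Nodup.ext ?_ (range _).nodup).mpr ?_
  · rw [Multiset.nodup_add]
    refine ⟨?_, ?_, ?_⟩
    · refine Multiset.Nodup.map_on ?_ (Finset.Ioo i n).nodup
      intro a ha b hb h
      rw [Finset.mem_val, Finset.mem_Ioo] at ha hb
      rcases Nat.lt_trichotomy a b with hab | hab | hab
      · have := hRanti a b (Nat.le_of_lt hab); omega
      · exact hab
      · have := hRanti b a (Nat.le_of_lt hab); omega
    · refine Multiset.Nodup.map_on ?_ (range _).nodup
      intro a ha b hb h
      rw [Finset.mem_val, Finset.mem_range] at ha hb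
      rcases Nat.lt_trichotomy a b with hab | hab | hab
      · have := hCanti a b (Nat.le_of_lt hab); have := hC a; have := hC b; omega
      · exact hab
      · have := hCanti b a (Nat.le_of_lt hab); have := hC a; have := hC b; omega
    · rw [Multiset.disjoint_left]
      rintro x hx hx'
      rw [Multiset.mem_map] at hx hx'
      obtain ⟨k, hk, rfl⟩ := hx
      obtain ⟨j, hj, hkj⟩ := hx'
      rw [Finset.mem_val, Finset.mem_Ioo] at hk
      rw [Finset.mem_val, Finset.mem_range] at hj
      have h1 := hC j
      by_cases hcase : j < μ.rowLen k
      · have h2 : k < μ.colLen j := (hRC k j).mp hcase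
        omega
      · have h2 : μ.colLen j ≤ k := by
          have := (hRC k j).not.mp hcase; omega
        omega
  · intro m
    simp only [Multiset.mem_add, Multiset.mem_map, Finset.mem_val, Finset.mem_Ioo,
      Finset.mem_range]
    constructor
    · rintro (⟨k, ⟨hik, hkn⟩, rfl⟩ | ⟨j, hj, rfl⟩)
      · have h1 := hRanti i k (Nat.le_of_lt hik)
        omega
      · have h2 : i < μ.colLen j := (hRC i j).mp hj
        have := hC j
        omega
    · intro hm
      by_cases h0 : m + μ.colLen 0 < n
      · left
        refine ⟨n - 1 - m, ⟨?_, by omega⟩, ?_⟩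
        · by_cases hLi : 0 < μ.rowLen i
          · have : i < μ.colLen 0 := (hRC i 0).mp hLi
            omega
          · omega
        · have hz : μ.rowLen (n - 1 - m) = 0 := by
            by_contra hz
            have : n - 1 - m < μ.colLen 0 := (hRC (n - 1 - m) 0).mp (by omega)
            omega
          omega
      · -- find the largest j with n - colLen j + j ≤ m
        set P : ℕ → Prop := fun j => n - μ.colLen j + j ≤ m with hP
        have hP0 : P 0 := by simp only [hP]; omega
        set j := Nat.findGreatest P m with hjdef
        have hPj : P j := Nat.findGreatest_spec (Nat.zero_le m) hP0
        have hPj1 : ¬ P (j + 1) := by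
          by_cases hjm : j + 1 ≤ m
          · exact Nat.findGreatest_is_greatest (by omega) hjm
          · simp only [hP]
            have := hC (j + 1)
            omega
        simp only [hP] at hPj hPj1
        have hCj := hC j
        have hCj1 := hC (j + 1)
        have hCm := hCanti j (j + 1) (by omega)
        by_cases heq : n - μ.colLen j + j = m
        · right
          refine ⟨j, ?_, heq⟩
          by_contra hj
          have h2 : μ.colLen j ≤ i := by
            have := (hRC i j).not.mp hj; omega
          omega
        · left
          have hk1 : n - μ.colLen j + j < m := by omega
          have hkc : n + j - m < μ.colLen j := by omega
          have hkc1 : μ.colLen (j + 1) ≤ n + j - m := by omega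
          have hmem1 : j < μ.rowLen (n + j - m) := (hRC _ j).mpr hkc
          have hmem2 : ¬ (j + 1 < μ.rowLen (n + j - m)) := by
            intro h
            have := (hRC (n + j - m) (j + 1)).mp h
            omega
          have hLk : μ.rowLen (n + j - m) = j + 1 := by omega
          refine ⟨n + j - m, ⟨?_, by omega⟩, by omega⟩
          by_contra hik
          have := hRanti (n + j - m) i (by omega)
          omega

/-- Per-row identity, integer version. -/
private lemma rowId (μ : YoungDiagram) (n i : ℕ) (hi : i < n) (hlen : μ.colLen 0 ≤ n) :
    ((range (μ.rowLen i)).val.map fun j => (hookLength μ i j : ℤ)) +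
      ((Finset.Ioo i n).val.map fun k =>
        (μ.rowLen i : ℤ) - (μ.rowLen k : ℤ) + k - i) =
    ((range (μ.rowLen i)).val.map fun (j : ℕ) => (n : ℤ) + j - i) +
      ((range (n - 1 - i)).val.map fun (v : ℕ) => (v : ℤ) + 1) := by
  have hC : ∀ j, μ.colLen j ≤ n := fun j => le_trans (μ.colLen_anti 0 j (Nat.zero_le _)) hlen
  have hRC : ∀ k j, j < μ.rowLen k ↔ k < μ.colLen j := by
    intro k j
    rw [← YoungDiagram.mem_iff_lt_rowLen, YoungDiagram.mem_iff_lt_colLen]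
  have key := congrArg (Multiset.map
      (fun v : ℕ => ((μ.rowLen i + (n - 1 - i) : ℕ) : ℤ) - (v : ℤ))) (maya μ n i hi hlen)
  simp only [Multiset.map_add, Multiset.map_map, Function.comp_def] at key
  have e1 : ((Finset.Ioo i n).val.map fun k =>
        (μ.rowLen i : ℤ) - (μ.rowLen k : ℤ) + k - i) =
      ((Finset.Ioo i n).val.map fun k =>
        ((μ.rowLen i + (n - 1 - i) : ℕ) : ℤ) - ((μ.rowLen k + (n - 1 - k) : ℕ) : ℤ)) := by
    refine Multiset.map_congr rfl fun k hk => ?_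
    rw [Finset.mem_val, Finset.mem_Ioo] at hk
    omega
  have e2 : ((range (μ.rowLen i)).val.map fun j => (hookLength μ i j : ℤ)) =
      ((range (μ.rowLen i)).val.map fun j =>
        ((μ.rowLen i + (n - 1 - i) : ℕ) : ℤ) - ((n - μ.colLen j + j : ℕ) : ℤ)) := by
    refine Multiset.map_congr rfl fun j hj => ?_
    rw [Finset.mem_val, Finset.mem_range] at hj
    have h1 : i < μ.colLen j := (hRC i j).mp hj
    have h2 := hC j
    simp only [hookLength]
    omega
  rw [e1, e2, add_comm, key]
  have hsplit : (range (μ.rowLen i + (n - 1 - i))).val =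
      (range (μ.rowLen i)).val + ((range (n - 1 - i)).val.map fun t => μ.rowLen i + t) := by
    rw [Finset.range_val, Finset.range_val, Finset.range_val, Multiset.range_add]
  rw [hsplit, Multiset.map_add, Multiset.map_map, Function.comp_def]
  congr 1
  · conv_rhs => rw [← revRange (μ.rowLen i), Multiset.map_map]
    refine Multiset.map_congr rfl fun v hv => ?_
    rw [Finset.mem_val, Finset.mem_range] at hv
    simp only [Function.comp_apply]
    omega
  · conv_rhs => rw [← revRange (n - 1 - i), Multiset.map_map]
    refine Multiset.map_congr rfl fun t ht => ?_
    rw [Finset.mem_val, Finset.mem_range] at ht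
    simp only [Function.comp_apply]
    omega

/-- Decompose the cells of `μ` by rows. -/
private lemma cells_decomp (μ : YoungDiagram) (n : ℕ) (hlen : μ.colLen 0 ≤ n) :
    μ.cells.val = (range n).val.bind fun i =>
      (range (μ.rowLen i)).val.map fun j => (i, j) := by
  refine (Multiset.Nodup.ext μ.cells.nodup ?_).mpr ?_
  · rw [Multiset.nodup_bind]
    constructor
    · intro i _
      refine Multiset.Nodup.map ?_ (range _).nodup
      intro a b h
      simpa using h
    · refine Multiset.Nodup.pairwise ?_ (range n).nodup
      intro a _ b _ hab
      rw [Function.onFun, Multiset.disjoint_left]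
      rintro ⟨x, y⟩ hx hy
      rw [Multiset.mem_map] at hx hy
      obtain ⟨j1, _, h1⟩ := hx
      obtain ⟨j2, _, h2⟩ := hy
      apply hab
      rw [Prod.mk.injEq] at h1 h2
      omega
  · rintro ⟨a, b⟩
    simp only [Finset.mem_val, YoungDiagram.mem_cells, Multiset.mem_bind, Multiset.mem_map,
      Finset.mem_range, Prod.mk.injEq]
    constructor
    · intro hab
      have hb : b < μ.rowLen a := YoungDiagram.mem_iff_lt_rowLen.mp hab
      have ha : a < μ.colLen b := YoungDiagram.mem_iff_lt_colLen.mp hab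
      have := μ.colLen_anti 0 b (Nat.zero_le _)
      exact ⟨a, by omega, b, hb, rfl, rfl⟩
    · rintro ⟨i, hi, j, hj, rfl, rfl⟩
      exact YoungDiagram.mem_iff_lt_rowLen.mpr hj

/-- Decompose the strictly-upper-triangular pairs by rows. -/
private lemma pairs_decomp (n : ℕ) :
    ((range n ×ˢ range n).filter fun p => p.1 < p.2).val =
      (range n).val.bind fun i => (Finset.Ioo i n).val.map fun k => (i, k) := by
  refine (Multiset.Nodup.ext ((range n ×ˢ range n).filter _).nodup ?_).mpr ?_
  · rw [Multiset.nodup_bind]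
    constructor
    · intro i _
      refine Multiset.Nodup.map ?_ (Finset.Ioo i n).nodup
      intro a b h
      simpa using h
    · refine Multiset.Nodup.pairwise ?_ (range n).nodup
      intro a _ b _ hab
      rw [Function.onFun, Multiset.disjoint_left]
      rintro ⟨x, y⟩ hx hy
      rw [Multiset.mem_map] at hx hy
      obtain ⟨k1, _, h1⟩ := hx
      obtain ⟨k2, _, h2⟩ := hy
      apply hab
      rw [Prod.mk.injEq] at h1 h2
      omega
  · rintro ⟨a, b⟩
    simp only [Finset.mem_val, Finset.mem_filter, Finset.mem_product, Finset.mem_range,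
      Multiset.mem_bind, Multiset.mem_map, Finset.mem_Ioo, Prod.mk.injEq]
    constructor
    · rintro ⟨⟨ha, hb⟩, hab⟩
      exact ⟨a, ha, b, ⟨hab, hb⟩, rfl, rfl⟩
    · rintro ⟨i, hi, k, ⟨hik, hk⟩, rfl, rfl⟩
      exact ⟨⟨hi, hk⟩, hik⟩

/-- Decompose the staircase multiset by rows. -/
private lemma stair_decomp (n : ℕ) :
    ((Finset.Ico 1 n).val.bind fun k => Multiset.replicate (n - k) (k : ℤ)) =
      (range n).val.bind fun i => (range (n - 1 - i)).val.map fun (v : ℕ) => (v : ℤ) + 1 := by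
  refine Multiset.ext.mpr fun x => ?_
  rw [Multiset.count_bind, Multiset.count_bind,
    ← Finset.sum_eq_multiset_sum, ← Finset.sum_eq_multiset_sum]
  have hL : (∑ k ∈ Finset.Ico 1 n,
      Multiset.count x (Multiset.replicate (n - k) (k : ℤ))) =
      ∑ k ∈ Finset.Ico 1 n, if (k : ℤ) = x then n - k else 0 :=
    Finset.sum_congr rfl fun k _ => by rw [Multiset.count_replicate]
  have hR : (∑ i ∈ range n,
      Multiset.count x ((range (n - 1 - i)).val.map fun (v : ℕ) => (v : ℤ) + 1)) =
      ∑ i ∈ range n, if 1 ≤ x ∧ x ≤ (n : ℤ) - 1 - i then 1 else 0 := by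
    refine Finset.sum_congr rfl fun i hi => ?_
    rw [Finset.mem_range] at hi
    have hnd : Multiset.Nodup ((range (n - 1 - i)).val.map fun v : ℕ => (v : ℤ) + 1) := by
      refine Multiset.Nodup.map ?_ (range _).nodup
      intro a b h
      simpa using h
    rw [Multiset.count_eq_of_nodup hnd]
    congr 1
    simp only [eq_iff_iff, Multiset.mem_map, Finset.mem_val, Finset.mem_range]
    constructor
    · rintro ⟨v, hv, rfl⟩; omega
    · intro hx
      refine ⟨(x - 1).toNat, by omega, by omega⟩
  rw [hL, hR]
  by_cases hx : 1 ≤ x ∧ x ≤ (n : ℤ) - 1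
  · have hA : (∑ k ∈ Finset.Ico 1 n, if (k : ℤ) = x then n - k else 0) = n - x.toNat := by
      rw [Finset.sum_eq_single x.toNat]
      · rw [if_pos (by omega)]
      · intro k hk hkx
        rw [if_neg (by omega)]
      · intro hk
        rw [Finset.mem_Ico] at hk
        omega
    have hB : (∑ i ∈ range n, if 1 ≤ x ∧ x ≤ (n : ℤ) - 1 - i then 1 else 0) = n - x.toNat := by
      have h1 : (∑ i ∈ range n, if 1 ≤ x ∧ x ≤ (n : ℤ) - 1 - i then (1 : ℕ) else 0)
          = ∑ i ∈ range n, if i < n - x.toNat then 1 else 0 :=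
        Finset.sum_congr rfl fun i _ => if_congr (by omega) rfl rfl
      rw [h1, Finset.sum_boole, Nat.cast_id,
        show (range n).filter (fun i => i < n - x.toNat) = range (n - x.toNat) by
          ext i
          simp only [Finset.mem_filter, Finset.mem_range]
          omega,
        Finset.card_range]
    rw [hA, hB]
  · rw [Finset.sum_eq_zero, Finset.sum_eq_zero]
    · intro i _
      rw [if_neg (by omega)]
    · intro k hk
      rw [Finset.mem_Ico] at hk
      rw [if_neg (by omega)]

/-- Multiset identity behind the Stanley hook length formula.  For a partition `μ`
with at most `n` rows (rows and columns indexed from `0`; `λ_i = μ.rowLen i`,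
content `c(i,j) = j - i`):
`{h(□) : □ ∈ μ} ⊔ {λ_i - λ_j + j - i : i < j < n}
  = {n + c(□) : □ ∈ μ} ⊔ {1^{(n-1)}, 2^{(n-2)}, …, (n-1)^{(1)}}`. -/
theorem hook_content_multiset_identity (μ : YoungDiagram) (n : ℕ)
    (hlen : μ.colLen 0 ≤ n) :
    μ.cells.val.map (fun c => (hookLength μ c.1 c.2 : ℤ)) +
      (((range n ×ˢ range n).filter fun p => p.1 < p.2).val.map
        (fun p => (μ.rowLen p.1 : ℤ) - (μ.rowLen p.2 : ℤ) + p.2 - p.1)) =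
    μ.cells.val.map (fun c => (n : ℤ) + c.2 - c.1) +
      ((Finset.Ico 1 n).val.bind fun k => Multiset.replicate (n - k) (k : ℤ)) := by
  rw [cells_decomp μ n hlen, pairs_decomp n, stair_decomp n,
    Multiset.map_bind, Multiset.map_bind, Multiset.map_bind,
    ← Multiset.bind_add, ← Multiset.bind_add]
  refine Multiset.bind_congr fun i hi => ?_
  rw [Finset.mem_val, Finset.mem_range] at hi
  simp only [Multiset.map_map, Function.comp_def]
  exact rowId μ n i hi hlen
end

section
/- Let λ be an integer partition of n and T any standard Young tableau of shape λ. Then b(λ) ≤ maj(T) ≤ n(n−1)/2 − ∑_{i=1}^{ℓ(λ)} λ_i(λ_i − 1)/2, where b(λ) = ∑_{i=1}^{ℓ(λ)} (i−1)λ_i. -/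
open Finset
open scoped Classical

/-- A standard tableau of shape `μ ⊢ n`: a bijective filling of the cells by
`Fin n` (value `k` standing for the entry `k+1`), strictly increasing along
rows and columns. -/
def IsStandard (μ : YoungDiagram) (T : μ.cells → Fin μ.card) : Prop :=
  Function.Bijective T ∧
    (∀ c c' : μ.cells, (c : ℕ × ℕ).1 = (c' : ℕ × ℕ).1 →
      (c : ℕ × ℕ).2 < (c' : ℕ × ℕ).2 → T c < T c') ∧
    (∀ c c' : μ.cells, (c : ℕ × ℕ).2 = (c' : ℕ × ℕ).2 →
      (c : ℕ × ℕ).1 < (c' : ℕ × ℕ).1 → T c < T c')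

/-- The major index of a tableau: the sum of the descents. -/
noncomputable def maj (μ : YoungDiagram) (T : μ.cells → Fin μ.card) : ℕ :=
  ∑ k ∈ Finset.range μ.card,
    if ∃ c c' : μ.cells, (T c : ℕ) + 1 = k ∧ (T c' : ℕ) + 1 = k + 1 ∧
        (c : ℕ × ℕ).1 < (c' : ℕ × ℕ).1 then k else 0

/-- `b(λ) = ∑_{i ≥ 1} (i-1) λ_i` (rows indexed from `0` here, so `∑ i·λ_{i+1}`). -/
def bstat (μ : YoungDiagram) : ℕ :=
  ∑ i ∈ Finset.range μ.card, i * μ.rowLen i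

/-! Split `range n` into the descents of `T` and the rest. Since
`∑_{k ∈ S} k = ∑_{v < n} #{k ∈ S | v < k}`, summing over the values `v = T c` gives
`maj T = ∑_c #{descents k > T c}`. Going down a column the row of the running value increases,
so between vertically adjacent cells there is a descent; hence cell `(i, j)` sees at least
`colLen j - 1 - i` descents above its value, and
`maj T ≥ ∑_c (colLen j - 1 - i) = ∑_c i = b(λ)`.
Along a row the row of the running value does not increase, so between horizontally adjacent
cells there is a non-descent, and in the same way the non-descents sum to at least
`∑_c j = ∑_i λ_i (λ_i - 1) / 2`; the upper bound follows because all `k < n` together sum to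
`n (n - 1) / 2`. -/

section Ascents

variable {α : Type*} [LinearOrder α] (f : ℕ → α) {u v : ℕ}

theorem exists_ascent_of_lt (huv : u ≤ v) (h : f u < f v) :
    ∃ k, u < k ∧ k ≤ v ∧ f (k - 1) < f k := by
  by_contra! hk
  have hanti : AntitoneOn f (Set.Icc u v) :=
    antitoneOn_of_add_one_le Set.ordConnected_Icc fun a _ ha ha' => by
      simpa using hk (a + 1) (Nat.lt_succ_of_le ha.1) ha'.2
  exact (hanti ⟨le_rfl, huv⟩ ⟨huv, le_rfl⟩ huv).not_gt h

theorem exists_not_ascent_of_le (huv : u < v) (h : f v ≤ f u) :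
    ∃ k, u < k ∧ k ≤ v ∧ ¬ f (k - 1) < f k := by
  by_contra! hk
  have hmono : StrictMonoOn f (Set.Icc u v) :=
    strictMonoOn_of_lt_add_one Set.ordConnected_Icc fun a _ ha ha' => by
      simpa using hk (a + 1) (Nat.lt_succ_of_le ha.1) ha'.2
  exact (hmono ⟨le_rfl, huv.le⟩ ⟨huv.le, le_rfl⟩ huv).not_ge h

end Ascents

theorem card_filter_lt_add_one_le {S : Finset ℕ} {u v k : ℕ} (hk : k ∈ S) (huk : u < k)
    (hkv : k ≤ v) : #{x ∈ S | v < x} + 1 ≤ #{x ∈ S | u < x} := by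
  calc #{x ∈ S | v < x} + 1 = #(insert k {x ∈ S | v < x}) :=
        (card_insert_of_notMem (by simp [hkv])).symm
    _ ≤ #{x ∈ S | u < x} := card_le_card <| insert_subset (by simp [hk, huk]) <|
        monotone_filter_right S fun x _ hx => huk.trans_le (hkv.trans hx.le)

theorem sum_eq_sum_range_card_filter_lt {S : Finset ℕ} {n : ℕ} (hS : S ⊆ range n) :
    ∑ k ∈ S, k = ∑ v ∈ range n, #{k ∈ S | v < k} := by
  simp_rw [card_filter]
  rw [sum_comm]
  refine sum_congr rfl fun k hk => ?_
  have hkn : k ≤ n := (mem_range.1 (hS hk)).le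
  rw [← card_filter, show {v ∈ range n | v < k} = range k by ext; simp; omega, card_range]

theorem Function.Bijective.sum_eq_sum_card_filter_lt {ι : Type*} [Fintype ι] {n : ℕ}
    {T : ι → Fin n} (hT : Function.Bijective T) {S : Finset ℕ} (hS : S ⊆ range n) :
    ∑ k ∈ S, k = ∑ a, #{k ∈ S | (T a : ℕ) < k} := by
  rw [hT.sum_comp (fun v : Fin n => #{k ∈ S | (v : ℕ) < k}),
    Fin.sum_univ_eq_sum_range (fun v => #{k ∈ S | v < k}), sum_eq_sum_range_card_filter_lt hS]

theorem cast_sum_range_id {K : Type*} [Field K] [CharZero K] (m : ℕ) :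
    ∑ j ∈ range m, (j : K) = m * (m - 1) / 2 := by
  induction m with
  | zero => simp
  | succ m ih =>
    rw [sum_range_succ, ih]
    push_cast
    ring

namespace YoungDiagram

theorem fst_lt_card (μ : YoungDiagram) {c : ℕ × ℕ} (hc : c ∈ μ) : c.1 < μ.card :=
  calc c.1 < μ.colLen c.2 := mem_iff_lt_colLen.1 hc
    _ = #(μ.col c.2) := μ.colLen_eq_card
    _ ≤ μ.card := card_filter_le _ _

theorem sum_cells_eq_sum_rowLen {M : Type*} [AddCommMonoid M] (μ : YoungDiagram)
    (F : ℕ × ℕ → M) :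
    ∑ c ∈ μ.cells, F c = ∑ i ∈ range μ.card, ∑ j ∈ range (μ.rowLen i), F (i, j) := by
  rw [← sum_fiberwise_of_maps_to (g := Prod.fst) fun c hc => mem_range.2 (μ.fst_lt_card hc)]
  refine sum_congr rfl fun i _ => ?_
  rw [show {c ∈ μ.cells | c.1 = i} = μ.row i from rfl, row_eq_prod, sum_product,
    sum_singleton]

theorem sum_cells_colLen_sub (μ : YoungDiagram) :
    ∑ c ∈ μ.cells, (μ.colLen c.2 - 1 - c.1) = ∑ c ∈ μ.cells, c.1 := by
  refine sum_nbij' (fun c => (μ.colLen c.2 - 1 - c.1, c.2))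
    (fun c => (μ.colLen c.2 - 1 - c.1, c.2)) ?_ ?_ ?_ ?_ fun _ _ => rfl <;>
  · rintro ⟨i, j⟩ h
    have := mem_iff_lt_colLen.1 ((mem_cells _).1 h)
    simp only [mem_cells, Prod.mk.injEq, mem_iff_lt_colLen, and_true]
    omega

theorem sum_cells_rowLen_sub (μ : YoungDiagram) :
    ∑ c ∈ μ.cells, (μ.rowLen c.1 - 1 - c.2) = ∑ c ∈ μ.cells, c.2 := by
  refine sum_nbij' (fun c => (c.1, μ.rowLen c.1 - 1 - c.2))
    (fun c => (c.1, μ.rowLen c.1 - 1 - c.2)) ?_ ?_ ?_ ?_ fun _ _ => rfl <;>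
  · rintro ⟨i, j⟩ h
    have := mem_iff_lt_rowLen.1 ((mem_cells _).1 h)
    simp only [mem_cells, Prod.mk.injEq, mem_iff_lt_rowLen, true_and]
    omega

end YoungDiagram

theorem bstat_eq_sum_cells (μ : YoungDiagram) : bstat μ = ∑ c ∈ μ.cells, c.1 := by
  simp [bstat, μ.sum_cells_eq_sum_rowLen, mul_comm]

section Tableau

variable {μ : YoungDiagram} {T : μ.cells → Fin μ.card}

noncomputable def rowOf (T : μ.cells → Fin μ.card) (m : ℕ) : ℕ :=
  if h : ∃ c, (T c : ℕ) = m then (h.choose : ℕ × ℕ).1 else 0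

theorem rowOf_apply (hT : Function.Injective T) (c : μ.cells) :
    rowOf T (T c) = (c : ℕ × ℕ).1 := by
  have h : ∃ c', (T c' : ℕ) = T c := ⟨c, rfl⟩
  rw [rowOf, dif_pos h, hT (Fin.ext h.choose_spec)]

-- Truncated subtraction makes `0` never a descent.
noncomputable def descents (T : μ.cells → Fin μ.card) : Finset ℕ :=
  {k ∈ range μ.card | rowOf T (k - 1) < rowOf T k}

theorem descents_subset_range : descents T ⊆ range μ.card := filter_subset _ _

theorem maj_eq_sum_descents (hT : Function.Bijective T) : maj μ T = ∑ k ∈ descents T, k := by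
  rw [maj, descents, sum_filter]
  refine sum_congr rfl fun k hk => if_congr ⟨?_, fun hlt => ?_⟩ rfl rfl
  · rintro ⟨c, c', hc, hc', hlt⟩
    rwa [show k - 1 = T c by omega, show k = T c' by omega, rowOf_apply hT.1,
      rowOf_apply hT.1]
  · have hk0 : 0 < k := Nat.pos_of_ne_zero fun h => by simp [h] at hlt
    obtain ⟨c, hc⟩ := hT.2 ⟨k - 1, by have := mem_range.1 hk; omega⟩
    obtain ⟨c', hc'⟩ := hT.2 ⟨k, mem_range.1 hk⟩
    refine ⟨c, c', by rw [hc]; exact Nat.sub_add_cancel hk0, by rw [hc'], ?_⟩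
    rwa [← rowOf_apply hT.1, ← rowOf_apply hT.1, hc, hc']

theorem exists_mem_descents (hT : Function.Injective T) {c c' : μ.cells} (hv : T c ≤ T c')
    (hrow : (c : ℕ × ℕ).1 < (c' : ℕ × ℕ).1) :
    ∃ k ∈ descents T, (T c : ℕ) < k ∧ k ≤ T c' := by
  obtain ⟨k, hck, hkc', hk⟩ := exists_ascent_of_lt (rowOf T) (u := T c) (v := T c') hv
    (by rwa [rowOf_apply hT, rowOf_apply hT])
  exact ⟨k, mem_filter.2 ⟨mem_range.2 (hkc'.trans_lt (T c').2), hk⟩, hck, hkc'⟩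

theorem exists_mem_sdiff_descents (hT : Function.Injective T) {c c' : μ.cells} (hv : T c < T c')
    (hrow : (c' : ℕ × ℕ).1 ≤ (c : ℕ × ℕ).1) :
    ∃ k ∈ range μ.card \ descents T, (T c : ℕ) < k ∧ k ≤ T c' := by
  obtain ⟨k, hck, hkc', hk⟩ := exists_not_ascent_of_le (rowOf T) (u := T c) (v := T c') hv
    (by rwa [rowOf_apply hT, rowOf_apply hT])
  have hkn : k ∈ range μ.card := mem_range.2 (hkc'.trans_lt (T c').2)
  exact ⟨k, mem_sdiff.2 ⟨hkn, fun h => hk (mem_filter.1 h).2⟩, hck, hkc'⟩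

theorem colLen_sub_le_card_descents (hT : IsStandard μ T) (c : μ.cells) :
    μ.colLen (c : ℕ × ℕ).2 - 1 - (c : ℕ × ℕ).1 ≤
      #{k ∈ descents T | (T c : ℕ) < k} := by
  obtain ⟨⟨i, j⟩, hc⟩ := c
  induction hd : μ.colLen j - 1 - i generalizing i with
  | zero => exact Nat.zero_le _
  | succ d ih =>
    have hbelow : (i + 1, j) ∈ μ.cells := by
      rw [YoungDiagram.mem_cells, YoungDiagram.mem_iff_lt_colLen] at hc ⊢
      omega
    obtain ⟨k, hk, hck, hkc'⟩ := exists_mem_descents hT.1.1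
      (hT.2.2 ⟨(i, j), hc⟩ ⟨(i + 1, j), hbelow⟩ rfl (Nat.lt_succ_self i)).le
      (Nat.lt_succ_self i)
    have := ih (i + 1) hbelow (by omega)
    have := card_filter_lt_add_one_le hk hck hkc'
    omega

theorem rowLen_sub_le_card_sdiff_descents (hT : IsStandard μ T) (c : μ.cells) :
    μ.rowLen (c : ℕ × ℕ).1 - 1 - (c : ℕ × ℕ).2 ≤
      #{k ∈ range μ.card \ descents T | (T c : ℕ) < k} := by
  obtain ⟨⟨i, j⟩, hc⟩ := c
  induction hd : μ.rowLen i - 1 - j generalizing j with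
  | zero => exact Nat.zero_le _
  | succ d ih =>
    have hright : (i, j + 1) ∈ μ.cells := by
      rw [YoungDiagram.mem_cells, YoungDiagram.mem_iff_lt_rowLen] at hc ⊢
      omega
    obtain ⟨k, hk, hck, hkc'⟩ := exists_mem_sdiff_descents hT.1.1
      (hT.2.1 ⟨(i, j), hc⟩ ⟨(i, j + 1), hright⟩ rfl (Nat.lt_succ_self j)) le_rfl
    have := ih (j + 1) hright (by omega)
    have := card_filter_lt_add_one_le hk hck hkc'
    omega

theorem bstat_le_maj (hT : IsStandard μ T) : bstat μ ≤ maj μ T :=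
  calc bstat μ = ∑ c ∈ μ.cells, (μ.colLen c.2 - 1 - c.1) := by
        rw [bstat_eq_sum_cells, μ.sum_cells_colLen_sub]
    _ = ∑ c : μ.cells, (μ.colLen (c : ℕ × ℕ).2 - 1 - (c : ℕ × ℕ).1) :=
        (sum_coe_sort _ _).symm
    _ ≤ ∑ c : μ.cells, #{k ∈ descents T | (T c : ℕ) < k} :=
        sum_le_sum fun c _ => colLen_sub_le_card_descents hT c
    _ = maj μ T := by
        rw [maj_eq_sum_descents hT.1, hT.1.sum_eq_sum_card_filter_lt descents_subset_range]

theorem maj_add_sum_cells_snd_le (hT : IsStandard μ T) :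
    maj μ T + ∑ c ∈ μ.cells, c.2 ≤ ∑ k ∈ range μ.card, k := by
  have hnondescents : ∑ c ∈ μ.cells, c.2 ≤ ∑ k ∈ range μ.card \ descents T, k :=
    calc ∑ c ∈ μ.cells, c.2 = ∑ c ∈ μ.cells, (μ.rowLen c.1 - 1 - c.2) :=
          μ.sum_cells_rowLen_sub.symm
      _ = ∑ c : μ.cells, (μ.rowLen (c : ℕ × ℕ).1 - 1 - (c : ℕ × ℕ).2) :=
          (sum_coe_sort _ _).symm
      _ ≤ ∑ c : μ.cells, #{k ∈ range μ.card \ descents T | (T c : ℕ) < k} :=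
          sum_le_sum fun c _ => rowLen_sub_le_card_sdiff_descents hT c
      _ = ∑ k ∈ range μ.card \ descents T, k :=
          (hT.1.sum_eq_sum_card_filter_lt sdiff_subset).symm
  rw [maj_eq_sum_descents hT.1, ← sum_sdiff (descents_subset_range (T := T))]
  omega

end Tableau

/-- For any standard tableau `T` of shape `μ ⊢ n`,
`b(μ) ≤ maj(T) ≤ n(n-1)/2 - ∑_i λ_i(λ_i - 1)/2`. -/
theorem maj_range (μ : YoungDiagram) (n : ℕ) (hn : μ.card = n)
    (T : μ.cells → Fin μ.card) (hT : IsStandard μ T) :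
    bstat μ ≤ maj μ T ∧
      (maj μ T : ℚ) ≤ (n : ℚ) * ((n : ℚ) - 1) / 2 -
        ∑ i ∈ Finset.range n, (μ.rowLen i : ℚ) * ((μ.rowLen i : ℚ) - 1) / 2 := by
  subst hn
  refine ⟨bstat_le_maj hT, ?_⟩
  have hrows : ∑ i ∈ range μ.card, (μ.rowLen i : ℚ) * ((μ.rowLen i : ℚ) - 1) / 2 =
      ∑ c ∈ μ.cells, (c.2 : ℚ) := by
    simp only [μ.sum_cells_eq_sum_rowLen, cast_sum_range_id]
  have hle :
      ((maj μ T + ∑ c ∈ μ.cells, c.2 : ℕ) : ℚ) ≤ ((∑ k ∈ range μ.card, k : ℕ) : ℚ) := by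
    exact_mod_cast maj_add_sum_cells_snd_le hT
  push_cast at hle
  rw [hrows, ← cast_sum_range_id]
  linarith
end

section
/- Let (f_n) be a sequence of holomorphic functions on a domain D ⊂ ℂ (open connected) which is uniformly bounded on every compact subset of D, and which converges pointwise to 0 on some nonempty open subset D' ⊂ D. Then (f_n) converges to 0 uniformly on every compact subset of D. -/
/-! The points near which `f n → 0` pointwise form an open set containing `D'`. It is also closed
in `D`: if `f n → 0` near `a` and `‖f n‖ ≤ M` on `closedBall a R ⊆ D`, the Taylor coefficients of
`f n` at `a` may be computed on a small circle where `f n → 0`, so by dominated convergence they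
tend to `0`; Cauchy's estimates bound them by `M / R ^ k` uniformly in `n`, and Tannery's theorem
applied to the Taylor series gives `f n → 0` uniformly on every smaller closed ball. By
connectedness this holds near every point of `D`, so the convergence is locally uniform. -/

open Filter Metric Complex Topology NNReal Real MeasureTheory

theorem tendstoUniformlyOn_zero_iff_tendsto {ι α G : Type*} [SeminormedAddCommGroup G]
    {F : ι → α → G} {l : Filter ι} {s : Set α} :
    TendstoUniformlyOn F 0 l s ↔ Tendsto (fun q : ι × α => F q.1 q.2) (l ×ˢ 𝓟 s) (𝓝 0) := by
  rw [tendstoUniformlyOn_iff_tendsto, uniformity_eq_comap_nhds_zero, tendsto_comap_iff]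
  simp [Function.comp_def]

theorem tendstoUniformlyOn_closedBall_of_hasFPowerSeriesOnBall {ι 𝕜 E G : Type*}
    [NontriviallyNormedField 𝕜] [NormedAddCommGroup E] [NormedSpace 𝕜 E]
    [NormedAddCommGroup G] [NormedSpace 𝕜 G] [CompleteSpace G] {F : ι → E → G} {l : Filter ι}
    {p : ι → FormalMultilinearSeries 𝕜 E G} {a : E} {r R : ℝ≥0} {M : ℝ}
    (hp : ∀ i, HasFPowerSeriesOnBall (F i) (p i) a R) (hM : ∀ i k, ‖p i k‖ * R ^ k ≤ M)
    (hlim : ∀ k, Tendsto (fun i => p i k) l (𝓝 0)) (hrR : r < R) :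
    TendstoUniformlyOn F 0 l (closedBall a r) := by
  have hR : (0 : ℝ) < R := r.2.trans_lt hrR
  have hterm : ∀ i k, ∀ z ∈ closedBall a r, ‖p i k (fun _ => z - a)‖ ≤ ‖p i k‖ * r ^ k := by
    intro i k z hz
    calc ‖p i k (fun _ => z - a)‖ ≤ ‖p i k‖ * ‖z - a‖ ^ k := by
          simpa using (p i k).le_opNorm (fun _ => z - a)
      _ ≤ ‖p i k‖ * r ^ k := by
          gcongr
          exact mem_closedBall_iff_norm.1 hz
  have hsum : ∀ᶠ q in l ×ˢ 𝓟 (closedBall a r),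
      ∑' k, p q.1 k (fun _ => q.2 - a) = F q.1 q.2 := by
    refine eventually_prod_principal_iff.2 (Eventually.of_forall fun i z hz => ?_)
    have hz' : z - a ∈ eball (0 : E) R := by
      rw [mem_eball, edist_zero_right]
      exact_mod_cast (mem_closedBall_iff_norm.1 hz).trans_lt hrR
    simpa using ((hp i).hasSum hz').tsum_eq
  have hterm_lim : ∀ k, Tendsto (fun q : ι × E => p q.1 k (fun _ => q.2 - a))
      (l ×ˢ 𝓟 (closedBall a r)) (𝓝 0) := by
    intro k
    refine squeeze_zero_norm' (a := fun q => ‖p q.1 k‖ * r ^ k)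
      (eventually_prod_principal_iff.2 (Eventually.of_forall fun i z hz => hterm i k z hz)) ?_
    simpa using ((hlim k).norm.comp tendsto_fst).mul_const ((r : ℝ) ^ k)
  have hdom : ∀ᶠ q in l ×ˢ 𝓟 (closedBall a r),
      ∀ k, ‖p q.1 k (fun _ => q.2 - a)‖ ≤ M * (r / R : ℝ) ^ k := by
    refine eventually_prod_principal_iff.2 (Eventually.of_forall fun i z hz k => ?_)
    calc ‖p i k (fun _ => z - a)‖ ≤ ‖p i k‖ * R ^ k * (r / R : ℝ) ^ k := by
          rw [div_pow, mul_assoc, mul_div_cancel₀ _ (pow_pos hR k).ne']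
          exact hterm i k z hz
      _ ≤ M * (r / R : ℝ) ^ k := by gcongr; exact hM i k
  have hgeom : Summable fun k => M * (r / R : ℝ) ^ k :=
    (summable_geometric_of_lt_one (div_nonneg r.2 R.2) ((div_lt_one hR).2 hrR)).mul_left M
  rw [tendstoUniformlyOn_zero_iff_tendsto]
  simpa using (tendsto_tsum_of_dominated_convergence hgeom hterm_lim hdom).congr' hsum

variable {ι E : Type*} [NormedAddCommGroup E] [NormedSpace ℂ E] {F : ι → ℂ → E} {l : Filter ι}

theorem norm_cauchyPowerSeries_mul_pow_le {f : ℂ → E} {c : ℂ} {R M : ℝ} (hR : 0 < R)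
    (hf : ∀ z ∈ sphere c R, ‖f z‖ ≤ M) (k : ℕ) :
    ‖cauchyPowerSeries f c R k‖ * R ^ k ≤ M := by
  have hint : ∫ θ in (0)..2 * π, ‖f (circleMap c R θ)‖ ≤ M * (2 * π) := by
    refine (le_abs_self _).trans ?_
    simpa [abs_of_pos two_pi_pos] using intervalIntegral.norm_integral_le_of_norm_le_const
      (f := fun θ => ‖f (circleMap c R θ)‖) (a := 0) (b := 2 * π) fun θ _ => by
        simpa using hf _ (circleMap_mem_sphere c hR.le θ)
  calc ‖cauchyPowerSeries f c R k‖ * R ^ k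
      ≤ (2 * π)⁻¹ * (∫ θ in (0)..2 * π, ‖f (circleMap c R θ)‖) * R⁻¹ ^ k * R ^ k := by
        gcongr
        simpa [abs_of_pos hR] using norm_cauchyPowerSeries_le f c R k
    _ ≤ (2 * π)⁻¹ * (M * (2 * π)) := by
        rw [mul_assoc, ← mul_pow, inv_mul_cancel₀ hR.ne', one_pow, mul_one]
        gcongr
    _ = M := by field_simp

theorem tendsto_cauchyPowerSeries_zero [l.IsCountablyGenerated]
    {c : ℂ} {R M : ℝ} (hR : 0 ≤ R) (hF : ∀ i, ContinuousOn (F i) (sphere c R))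
    (hM : ∀ i, ∀ z ∈ sphere c R, ‖F i z‖ ≤ M) (hlim : ∀ z ∈ sphere c R, Tendsto (F · z) l (𝓝 0))
    (k : ℕ) : Tendsto (fun i => cauchyPowerSeries (F i) c R k) l (𝓝 0) := by
  have hmem := circleMap_mem_sphere c hR
  have hint : Tendsto (fun i => ∫ θ in (0)..2 * π, ‖F i (circleMap c R θ)‖) l (𝓝 0) := by
    simpa using intervalIntegral.tendsto_integral_filter_of_dominated_convergence
      (μ := volume) (a := 0) (b := 2 * π) (f := fun _ => 0) (fun _ => M)
      (Eventually.of_forall fun i =>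
        ((hF i).comp_continuous (continuous_circleMap c R) hmem).norm.aestronglyMeasurable)
      (Eventually.of_forall fun i => ae_of_all _ fun θ _ => by simpa using hM i _ (hmem θ))
      intervalIntegrable_const
      (ae_of_all _ fun θ _ => by simpa using (hlim _ (hmem θ)).norm)
  refine squeeze_zero_norm (fun i => norm_cauchyPowerSeries_le (F i) c R k) ?_
  simpa using (hint.const_mul (2 * π)⁻¹).mul_const (|R|⁻¹ ^ k)

variable [CompleteSpace E]

theorem cauchyPowerSeries_eq_of_differentiableOn {f : ℂ → E} {c : ℂ} {r R : ℝ}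
    (hf : DifferentiableOn ℂ f (closedBall c R)) (hr : 0 < r) (hrR : r ≤ R) :
    cauchyPowerSeries f c r = cauchyPowerSeries f c R := by
  lift r to ℝ≥0 using hr.le
  lift R to ℝ≥0 using hr.le.trans hrR
  exact ((hf.mono (closedBall_subset_closedBall hrR)).hasFPowerSeriesOnBall hr).hasFPowerSeriesAt
    |>.eq_formalMultilinearSeries (hf.hasFPowerSeriesOnBall (hr.trans_le hrR)).hasFPowerSeriesAt

theorem tendstoUniformlyOn_closedBall_of_eventually_tendsto [l.IsCountablyGenerated] {a : ℂ}
    {r R M : ℝ} (hrR : r < R) (hF : ∀ i, DifferentiableOn ℂ (F i) (closedBall a R))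
    (hM : ∀ i, ∀ z ∈ closedBall a R, ‖F i z‖ ≤ M)
    (hlim : ∀ᶠ z in 𝓝 a, Tendsto (F · z) l (𝓝 0)) :
    TendstoUniformlyOn F 0 l (closedBall a r) := by
  rcases lt_or_ge r 0 with hr | hr
  · simpa [closedBall_eq_empty.2 hr] using tendstoUniformlyOn_empty
  have hR : 0 < R := hr.trans_lt hrR
  obtain ⟨t, ht, htR, hts⟩ :
      ∃ t, 0 < t ∧ t ≤ R ∧ closedBall a t ⊆ {z | Tendsto (F · z) l (𝓝 0)} := by
    obtain ⟨t, ht, hts⟩ := nhds_basis_closedBall.mem_iff.1 hlim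
    exact ⟨min t R, lt_min ht hR, min_le_right _ _,
      (closedBall_subset_closedBall (min_le_left _ _)).trans hts⟩
  have htsub : sphere a t ⊆ closedBall a R :=
    sphere_subset_closedBall.trans (closedBall_subset_closedBall htR)
  -- The Taylor coefficients do not depend on the radius of the circle they are computed on.
  have hcoeff (k : ℕ) : Tendsto (fun i => cauchyPowerSeries (F i) a R k) l (𝓝 0) := by
    simp_rw [← cauchyPowerSeries_eq_of_differentiableOn (hF _) ht htR]
    exact tendsto_cauchyPowerSeries_zero ht.le (fun i => (hF i).continuousOn.mono htsub)
      (fun i z hz => hM i z (htsub hz)) (fun z hz => hts (sphere_subset_closedBall hz)) k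
  lift r to ℝ≥0 using hr
  lift R to ℝ≥0 using hR.le
  exact tendstoUniformlyOn_closedBall_of_hasFPowerSeriesOnBall
    (fun i => (hF i).hasFPowerSeriesOnBall hR)
    (fun i => norm_cauchyPowerSeries_mul_pow_le hR fun z hz => hM i z (sphere_subset_closedBall hz))
    hcoeff (mod_cast hrR)

section LocallyBounded

variable {U : Set ℂ} (hU : IsOpen U) (hF : ∀ i, DifferentiableOn ℂ (F i) U)
  (hbdd : ∀ K ⊆ U, IsCompact K → ∃ M : ℝ, ∀ i, ∀ z ∈ K, ‖F i z‖ ≤ M)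
include hU hF hbdd

theorem IsPreconnected.eventually_tendsto_zero [l.IsCountablyGenerated] (hUc : IsPreconnected U)
    {z₀ : ℂ} (hz₀ : z₀ ∈ U) (h₀ : ∀ᶠ w in 𝓝 z₀, Tendsto (F · w) l (𝓝 0)) :
    ∀ z ∈ U, ∀ᶠ w in 𝓝 z, Tendsto (F · w) l (𝓝 0) := by
  refine hUc.subset_of_closure_inter_subset isOpen_setOfPred_eventually_nhds ⟨z₀, hz₀, h₀⟩ ?_
  rintro z ⟨hzS, hzU⟩
  obtain ⟨ε, hε, hεU⟩ := nhds_basis_closedBall.mem_iff.1 (hU.mem_nhds hzU)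
  obtain ⟨a, haS, haz⟩ := Metric.mem_closure_iff.1 hzS (ε / 2) (half_pos hε)
  have haU : closedBall a (ε / 2) ⊆ U :=
    (closedBall_subset_closedBall' (by rw [dist_comm]; linarith)).trans hεU
  obtain ⟨M, hM⟩ := hbdd _ haU (isCompact_closedBall _ _)
  obtain ⟨r, hzr, hrε⟩ := exists_between haz
  have hunif := tendstoUniformlyOn_closedBall_of_eventually_tendsto hrε
    (fun i => (hF i).mono haU) hM haS
  filter_upwards [isOpen_ball.mem_nhds (mem_ball.2 hzr)] with w hw
    using hunif.tendsto_at (ball_subset_closedBall hw)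

theorem tendstoLocallyUniformlyOn_zero_of_eventually_tendsto [l.IsCountablyGenerated]
    (hlim : ∀ z ∈ U, ∀ᶠ w in 𝓝 z, Tendsto (F · w) l (𝓝 0)) :
    TendstoLocallyUniformlyOn F 0 l U := by
  refine tendstoLocallyUniformlyOn_of_forall_exists_nhds fun z hz => ?_
  obtain ⟨ε, hε, hεU⟩ := nhds_basis_closedBall.mem_iff.1 (hU.mem_nhds hz)
  obtain ⟨M, hM⟩ := hbdd _ hεU (isCompact_closedBall _ _)
  exact ⟨closedBall z (ε / 2), mem_nhdsWithin_of_mem_nhds (closedBall_mem_nhds _ (half_pos hε)),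
    tendstoUniformlyOn_closedBall_of_eventually_tendsto (half_lt_self hε)
      (fun i => (hF i).mono hεU) hM (hlim z hz)⟩

end LocallyBounded

/-- A sequence of holomorphic functions on a domain `D`, locally uniformly bounded,
converging pointwise to `0` on a nonempty open subset `D' ⊆ D`, converges to `0`
uniformly on every compact subset of `D`. -/
theorem holomorphic_bounded_tendsto_zero (D D' : Set ℂ)
    (hD : IsOpen D) (hDconn : IsConnected D)
    (hD' : IsOpen D') (hD'ne : D'.Nonempty) (hsub : D' ⊆ D)
    (f : ℕ → ℂ → ℂ) (hf : ∀ n, DifferentiableOn ℂ (f n) D)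
    (hbdd : ∀ K ⊆ D, IsCompact K → ∃ M : ℝ, ∀ n : ℕ, ∀ z ∈ K, ‖f n z‖ ≤ M)
    (hconv : ∀ z ∈ D', Filter.Tendsto (fun n => f n z) Filter.atTop (nhds 0)) :
    ∀ K ⊆ D, IsCompact K → TendstoUniformlyOn f 0 Filter.atTop K := by
  obtain ⟨z₀, hz₀⟩ := hD'ne
  have hlim := hDconn.isPreconnected.eventually_tendsto_zero hD hf hbdd (hsub hz₀)
    (eventually_of_mem (hD'.mem_nhds hz₀) hconv)
  exact (tendstoLocallyUniformlyOn_iff_forall_isCompact hD).1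
    (tendstoLocallyUniformlyOn_zero_of_eventually_tendsto hD hf hbdd hlim)
end

section
/- Fix a real x with −1 < x < 1, x ≠ 0. The function h ↦ log( x · sinh(h/2) / sinh(hx/2) ) (extended by continuity at h = 0 with value 0, i.e. equal to φ(h) − φ(hx) with φ(h) = log(sinh(h/2)/(h/2))) is even, strictly convex on ℝ, and strictly positive for h ≠ 0. -/
/-!
For `h ≠ 0` and `a ≠ 0`, `φ(h) - φ(ha) = log (sinh (h/2)) - log (sinh (ha/2)) + log a` (with
`Real.log t = log |t|`), whose second derivative is `a² / (4 sinh² (ha/2)) - 1 / (4 sinh² (h/2))`.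
For `0 < a < 1` and `h > 0` this is positive because `sinh (a t) < a sinh t` for `t > 0`, by strict
convexity of `sinh` on `[0, ∞)`; the same convexity makes `sinh t / t`, hence `φ`, strictly
increasing on `[0, ∞)`, which gives positivity. Since `φ` is even, `φ(h) - φ(hx) = F |h|` with
`F t = φ(t) - φ(t|x|)`, and a strictly convex, strictly increasing `F` on `[0, ∞)` composed with
`|·|` is strictly convex on `ℝ`.
-/

/-- `φ(u) = log(sinh(u/2)/(u/2))`, extended by `φ(0) = 0`. -/
noncomputable def phi (u : ℝ) : ℝ :=
  if u = 0 then 0 else Real.log (Real.sinh (u / 2) / (u / 2))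

open Real Set

theorem ConvexOn.strictMonoOn_Ici {𝕜 : Type*} [Field 𝕜] [LinearOrder 𝕜] [IsStrictOrderedRing 𝕜]
    {f : 𝕜 → 𝕜} {a : 𝕜} (hf : ConvexOn 𝕜 (Ici a) f) (ha : ∀ t, a < t → f a < f t) :
    StrictMonoOn f (Ici a) := by
  intro s hs t ht hst
  rcases (mem_Ici.1 hs).eq_or_lt with rfl | has
  · exact ha t hst
  · exact hf.strictMonoOn self_mem_Ici has (ha s has) ⟨hs, le_rfl⟩ ⟨ht, hst.le⟩ hst

theorem strictConvexOn_of_hasDerivWithinAt2_pos {D : Set ℝ} (hD : Convex ℝ D) {f f' f'' : ℝ → ℝ}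
    (hf : ContinuousOn f D) (hf' : ∀ x ∈ interior D, HasDerivWithinAt f (f' x) (interior D) x)
    (hf'' : ∀ x ∈ interior D, HasDerivWithinAt f' (f'' x) (interior D) x)
    (hf''₀ : ∀ x ∈ interior D, 0 < f'' x) : StrictConvexOn ℝ D f := by
  have hf'_mono : StrictMonoOn f' (interior D) :=
    strictMonoOn_of_hasDerivWithinAt_pos hD.interior
      (fun x hx ↦ (hf'' x hx).continuousWithinAt) (by rwa [interior_interior])
      (by rwa [interior_interior])
  exact (hf'_mono.congr (deriv_eqOn isOpen_interior hf').symm).strictConvexOn_of_deriv hD hf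

theorem StrictConvexOn.comp_abs {g : ℝ → ℝ} (hg : StrictConvexOn ℝ (Ici 0) g)
    (hg' : StrictMonoOn g (Ici 0)) : StrictConvexOn ℝ univ (fun t ↦ g |t|) := by
  refine ⟨convex_univ, fun p _ q _ hpq a b ha hb hab ↦ ?_⟩
  simp only [smul_eq_mul]
  have hmem : ∀ t : ℝ, |t| ∈ Ici (0 : ℝ) := fun t ↦ abs_nonneg t
  rcases eq_or_ne |p| |q| with hpq_abs | hpq_abs
  · -- Here strict convexity of `g` says nothing; strict monotonicity does the job.
    obtain rfl : p = -q := (abs_eq_abs.1 hpq_abs).resolve_left hpq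
    have hq : 0 < |q| := abs_pos.2 (by rintro rfl; simp at hpq)
    have hba : |b - a| < 1 := abs_lt.2 ⟨by linarith, by linarith⟩
    calc g |a * -q + b * q| = g (|b - a| * |q|) := by rw [← abs_mul]; ring_nf
      _ < g |q| := hg' (mul_nonneg (abs_nonneg _) hq.le) (hmem q) (mul_lt_of_lt_one_left hq hba)
      _ = a * g |-q| + b * g |q| := by rw [abs_neg, ← add_mul, hab, one_mul]
  · calc g |a * p + b * q| ≤ g (a * |p| + b * |q|) := by
          refine hg'.monotoneOn (hmem _) (by simp only [mem_Ici]; positivity) ?_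
          simpa [abs_mul, abs_of_pos ha, abs_of_pos hb] using abs_add_le (a * p) (b * q)
      _ < a * g |p| + b * g |q| := hg.2 (hmem p) (hmem q) hpq_abs ha hb hab

theorem strictConvexOn_sinh : StrictConvexOn ℝ (Ici 0) sinh := by
  refine StrictMonoOn.strictConvexOn_of_deriv (convex_Ici 0) continuous_sinh.continuousOn ?_
  rw [Real.deriv_sinh, interior_Ici]
  exact cosh_strictMonoOn.mono Ioi_subset_Ici_self

theorem sinh_div_self_lt {s t : ℝ} (hs : 0 < s) (hst : s < t) : sinh s / s < sinh t / t := by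
  simpa using strictConvexOn_sinh.secant_strict_mono self_mem_Ici (mem_Ici.2 hs.le)
    (mem_Ici.2 (hs.trans hst).le) hs.ne' (hs.trans hst).ne' hst

theorem sinh_mul_lt_mul_sinh {a t : ℝ} (ha₀ : 0 < a) (ha₁ : a < 1) (ht : 0 < t) :
    sinh (a * t) < a * sinh t := by
  have hat : 0 < a * t := mul_pos ha₀ ht
  have h := sinh_div_self_lt hat (mul_lt_of_lt_one_left ht ha₁)
  rw [div_lt_div_iff₀ hat ht] at h
  nlinarith

theorem one_lt_sinh_div_self {t : ℝ} (ht : 0 < t) : 1 < sinh t / t :=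
  (one_lt_div ht).2 (self_lt_sinh_iff.2 ht)

@[simp] theorem phi_zero : phi 0 = 0 := if_pos rfl

theorem phi_of_ne_zero {u : ℝ} (hu : u ≠ 0) : phi u = log (sinh (u / 2) / (u / 2)) := if_neg hu

theorem phi_neg (u : ℝ) : phi (-u) = phi u := by
  rcases eq_or_ne u 0 with rfl | hu
  · simp
  · rw [phi_of_ne_zero hu, phi_of_ne_zero (neg_ne_zero.2 hu), neg_div, sinh_neg, neg_div_neg_eq]

theorem phi_abs (u : ℝ) : phi |u| = phi u := by
  rcases abs_choice u with h | h <;> rw [h]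
  exact phi_neg u

-- The removable singularity of `phi` at `0` is that of the difference quotient of `sinh`.
theorem phi_eq_log_dslope (u : ℝ) : phi u = log (dslope sinh 0 (u / 2)) := by
  rcases eq_or_ne u 0 with rfl | hu
  · simp [dslope_same]
  · rw [phi_of_ne_zero hu, dslope_of_ne _ (by simpa using hu), slope_def_field, sinh_zero,
      sub_zero, sub_zero]

theorem dslope_sinh_zero_pos (t : ℝ) : 0 < dslope sinh 0 t := by
  rcases lt_trichotomy t 0 with ht | rfl | ht
  · rw [dslope_of_ne _ ht.ne, slope_def_field, sinh_zero, sub_zero, sub_zero]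
    exact div_pos_of_neg_of_neg (sinh_neg_iff.2 ht) ht
  · simp [dslope_same]
  · rw [dslope_of_ne _ ht.ne', slope_def_field, sinh_zero, sub_zero, sub_zero]
    exact div_pos (sinh_pos_iff.2 ht) ht

theorem continuous_phi : Continuous phi := by
  have hdslope : Continuous (dslope sinh 0) := continuousOn_univ.1 <|
    (continuousOn_dslope Filter.univ_mem).2 ⟨continuous_sinh.continuousOn, differentiableAt_sinh⟩
  simp only [funext phi_eq_log_dslope]
  exact (hdslope.comp (continuous_id.div_const 2)).log fun u ↦ (dslope_sinh_zero_pos _).ne'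

theorem phi_strictMonoOn : StrictMonoOn phi (Ici 0) := by
  intro s hs t _ hst
  have ht : 0 < t / 2 := by linarith [mem_Ici.1 hs]
  rw [phi_of_ne_zero (u := t) (by linarith)]
  rcases (mem_Ici.1 hs).eq_or_lt with rfl | hs
  · simpa using log_pos (one_lt_sinh_div_self ht)
  · rw [phi_of_ne_zero hs.ne']
    exact log_lt_log (zero_lt_one.trans (one_lt_sinh_div_self (by linarith)))
      (sinh_div_self_lt (by linarith) (by linarith))

theorem phi_sub_phi_mul_eq {a u : ℝ} (ha : a ≠ 0) (hu : u ≠ 0) :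
    phi u - phi (u * a) = log (sinh (u / 2)) - log (sinh (u * a / 2)) + log a := by
  have hu2 : u / 2 ≠ 0 := by simpa using hu
  have hua2 : u * a / 2 ≠ 0 := by simpa using mul_ne_zero hu ha
  rw [phi_of_ne_zero hu, phi_of_ne_zero (mul_ne_zero hu ha),
    log_div (sinh_ne_zero.2 hu2) hu2, log_div (sinh_ne_zero.2 hua2) hua2, mul_div_right_comm,
    log_mul hu2 ha]
  ring

theorem hasDerivAt_log_sinh_half {u : ℝ} (hu : u ≠ 0) :
    HasDerivAt (fun v ↦ log (sinh (v / 2))) (cosh (u / 2) / sinh (u / 2) / 2) u := by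
  refine (((hasDerivAt_id' u).div_const 2).sinh.log
    (sinh_ne_zero.2 (by simpa using hu))).congr_deriv ?_
  ring

theorem hasDerivAt_cosh_div_sinh_half {u : ℝ} (hu : u ≠ 0) :
    HasDerivAt (fun v ↦ cosh (v / 2) / sinh (v / 2) / 2) (-(1 / (4 * sinh (u / 2) ^ 2))) u := by
  have hs : sinh (u / 2) ≠ 0 := sinh_ne_zero.2 (by simpa using hu)
  have hhalf := (hasDerivAt_id' u).div_const 2
  refine ((hhalf.cosh.div hhalf.sinh hs).div_const 2).congr_deriv ?_
  field_simp
  linear_combination (-4) * cosh_sq_sub_sinh_sq (u / 2)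

theorem hasDerivAt_phi_sub_phi_mul {a u : ℝ} (ha : a ≠ 0) (hu : u ≠ 0) :
    HasDerivAt (fun v ↦ phi v - phi (v * a))
      (cosh (u / 2) / sinh (u / 2) / 2 - a * (cosh (u * a / 2) / sinh (u * a / 2) / 2)) u := by
  have h := ((hasDerivAt_log_sinh_half hu).sub
    ((hasDerivAt_log_sinh_half (mul_ne_zero hu ha)).comp u (hasDerivAt_mul_const a))).add_const
    (log a)
  refine (h.congr_deriv (by ring)).congr_of_eventuallyEq ?_
  filter_upwards [isOpen_ne.mem_nhds hu] with v hv
  exact phi_sub_phi_mul_eq ha hv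

theorem hasDerivAt2_phi_sub_phi_mul {a u : ℝ} (ha : a ≠ 0) (hu : u ≠ 0) :
    HasDerivAt
      (fun v ↦ cosh (v / 2) / sinh (v / 2) / 2 - a * (cosh (v * a / 2) / sinh (v * a / 2) / 2))
      (a ^ 2 / (4 * sinh (u * a / 2) ^ 2) - 1 / (4 * sinh (u / 2) ^ 2)) u := by
  refine ((hasDerivAt_cosh_div_sinh_half hu).sub (((hasDerivAt_cosh_div_sinh_half
    (mul_ne_zero hu ha)).comp u (hasDerivAt_mul_const a)).const_mul a)).congr_deriv ?_
  ring

theorem strictConvexOn_phi_sub_phi_mul {a : ℝ} (ha₀ : 0 < a) (ha₁ : a < 1) :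
    StrictConvexOn ℝ (Ici 0) (fun t ↦ phi t - phi (t * a)) := by
  have hne : ∀ u ∈ interior (Ici (0 : ℝ)), u ≠ 0 := by
    simp only [interior_Ici, mem_Ioi]
    exact fun u hu ↦ hu.ne'
  refine strictConvexOn_of_hasDerivWithinAt2_pos (convex_Ici 0)
    (continuous_phi.sub (continuous_phi.comp (continuous_mul_const a))).continuousOn
    (fun u hu ↦ (hasDerivAt_phi_sub_phi_mul ha₀.ne' (hne u hu)).hasDerivWithinAt)
    (fun u hu ↦ (hasDerivAt2_phi_sub_phi_mul ha₀.ne' (hne u hu)).hasDerivWithinAt) ?_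
  rw [interior_Ici]
  intro u (hu : 0 < u)
  have hlt : sinh (u * a / 2) < a * sinh (u / 2) := by
    rw [mul_div_right_comm, mul_comm]
    exact sinh_mul_lt_mul_sinh ha₀ ha₁ (by linarith)
  have hpos : 0 < sinh (u * a / 2) := sinh_pos_iff.2 (by positivity)
  rw [sub_pos, div_lt_div_iff₀ (by positivity) (by positivity)]
  nlinarith

/-- For fixed `x ∈ (-1,1)`, `x ≠ 0`, the function
`h ↦ log(x sinh(h/2)/sinh(hx/2)) = φ(h) - φ(hx)` is even, strictly convex on `ℝ`,
and strictly positive for `h ≠ 0`. -/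
theorem phi_diff_even_strictConvex_pos (x : ℝ) (hx1 : -1 < x) (hx2 : x < 1) (hx0 : x ≠ 0) :
    (∀ h : ℝ, phi (-h) - phi (-h * x) = phi h - phi (h * x)) ∧
    StrictConvexOn ℝ Set.univ (fun h : ℝ => phi h - phi (h * x)) ∧
    (∀ h : ℝ, h ≠ 0 → 0 < phi h - phi (h * x)) := by
  have hx₀ : 0 < |x| := abs_pos.2 hx0
  have hx₁ : |x| < 1 := abs_lt.2 ⟨hx1, hx2⟩
  set F : ℝ → ℝ := fun t ↦ phi t - phi (t * |x|)
  have hF_abs : ∀ h, phi h - phi (h * x) = F |h| := fun h ↦ by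
    simp only [F, ← abs_mul, phi_abs]
  have hF_pos : ∀ t, 0 < t → 0 < F t := fun t ht ↦
    sub_pos.2 (phi_strictMonoOn (mul_nonneg ht.le hx₀.le) ht.le (mul_lt_of_lt_one_right ht hx₁))
  refine ⟨fun h ↦ by rw [phi_neg, neg_mul, phi_neg], ?_,
    fun h hh ↦ (hF_abs h).symm ▸ hF_pos _ (abs_pos.2 hh)⟩
  have hF_conv := strictConvexOn_phi_sub_phi_mul hx₀ hx₁
  have hF_mono := hF_conv.convexOn.strictMonoOn_Ici (by simpa [F] using hF_pos)
  simpa only [hF_abs] using hF_conv.comp_abs hF_mono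
end
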